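/- Let {a(n)}_{n∈ℤ} be complex numbers with |a(n)| ≤ 1 for all n, and x ≥ 2. Then max_{θ∈[0,1]} max_{1 ≤ N ≤ x} |∑_{1≤|n|≤N} (a(n)/n) e(nθ)| = max_{θ∈[0,1]} |∑_{1≤|n|≤x} (a(n)/n) e(nθ)| + O(1), with an absolute implied constant. -/

import Mathlib

open Complex

/-- `e(x) = e^{2πix}` -/
noncomputable def e (x : ℝ) : ℂ := Complex.exp (2 * Real.pi * Complex.I * x)

/-- The sum `∑_{1 ≤ |n| ≤ N} (a(n)/n) e(nθ)` over nonzero integers `|n| ≤ N`. -/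
noncomputable def expSum (a : ℤ → ℂ) (N : ℕ) (θ : ℝ) : ℂ :=
  ∑ n ∈ (Finset.Icc (-(N : ℤ)) N).filter (fun n => n ≠ 0), a n / (n : ℂ) * e (n * θ)

/-!
Write `S_N = expSum a N`. Averaging `S_M(θ + t)` over `t ∈ [0, 1/N]` multiplies the `n`-th
coefficient by the mean `K(n)` of `e(nt)` over `[0, 1/N]`, and `|1 - K(n)| ≤ 2π|n|/N`,
`|K(n)| ≤ N/(π|n|)`. Hence for `N ≤ M` this average differs from `S_N(θ)` by at most
`∑_{|n| ≤ N} 2π/N + ∑_{N < |n|} N/(π n²) ≤ 4π + 2/π`, while its size is at most `max_θ |S_M(θ)|`.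
-/

open Finset
open scoped Real

lemma e_add (x y : ℝ) : e (x + y) = e x * e y := by
  simp only [e, ofReal_add, mul_add, Complex.exp_add]

lemma e_intCast (k : ℤ) : e k = 1 := by
  rw [e, show 2 * π * I * ((k : ℝ) : ℂ) = k * (2 * π * I) by push_cast; ring]
  exact exp_int_mul_two_pi_mul_I k

lemma norm_e (x : ℝ) : ‖e x‖ = 1 := by
  rw [e, show 2 * π * I * (x : ℂ) = ((2 * π * x : ℝ) : ℂ) * I by push_cast; ring]
  exact norm_exp_ofReal_mul_I _

lemma norm_e_sub_one_le (x : ℝ) : ‖e x - 1‖ ≤ 2 * π * |x| := by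
  rw [e, show 2 * π * I * (x : ℂ) = I * ((2 * π * x : ℝ) : ℂ) by push_cast; ring]
  simpa [abs_mul, abs_of_pos Real.pi_pos] using
    Real.norm_exp_I_mul_ofReal_sub_one_le (x := 2 * π * x)

lemma continuous_e : Continuous e := by
  unfold e; fun_prop

lemma integral_e_mul {ξ : ℝ} (hξ : ξ ≠ 0) (h : ℝ) :
    ∫ t in (0 : ℝ)..h, e (ξ * t) = (e (ξ * h) - 1) / (2 * π * I * ξ) := by
  have hc : 2 * π * I * (ξ : ℂ) ≠ 0 := by simp [hξ, Real.pi_ne_zero, I_ne_zero]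
  have he : ∀ t : ℝ, e (ξ * t) = Complex.exp (2 * π * I * ξ * t) := fun t => by
    rw [e]; push_cast; ring_nf
  simp_rw [he, integral_exp_mul_complex hc, ofReal_zero, mul_zero, Complex.exp_zero]

lemma norm_integral_e_mul_le {ξ : ℝ} (hξ : ξ ≠ 0) (h : ℝ) :
    ‖∫ t in (0 : ℝ)..h, e (ξ * t)‖ ≤ (π * |ξ|)⁻¹ := by
  have hnum : ‖e (ξ * h) - 1‖ ≤ 2 := (norm_sub_le _ _).trans (by simp [norm_e]; norm_num)
  have hden : ‖2 * π * I * (ξ : ℂ)‖ = 2 * (π * |ξ|) := by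
    simp [abs_of_pos Real.pi_pos]; ring
  rw [integral_e_mul hξ, norm_div, hden, div_le_iff₀ (by positivity)]
  field_simp
  linarith

noncomputable def eMean (h ξ : ℝ) : ℂ := (h⁻¹ : ℂ) * ∫ t in (0 : ℝ)..h, e (ξ * t)

lemma norm_eMean_le {h ξ : ℝ} (hh : 0 < h) (hξ : ξ ≠ 0) : ‖eMean h ξ‖ ≤ (π * h * |ξ|)⁻¹ := by
  rw [eMean, norm_mul, ← ofReal_inv, norm_real, Real.norm_of_nonneg (by positivity)]
  calc h⁻¹ * ‖∫ t in (0 : ℝ)..h, e (ξ * t)‖ ≤ h⁻¹ * (π * |ξ|)⁻¹ := by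
        gcongr; exact norm_integral_e_mul_le hξ h
    _ = (π * h * |ξ|)⁻¹ := by field_simp

lemma norm_one_sub_eMean_le {h : ℝ} (hh : 0 < h) (ξ : ℝ) : ‖1 - eMean h ξ‖ ≤ 2 * π * |ξ| * h := by
  have hint : IntervalIntegrable (fun t : ℝ => e (ξ * t)) MeasureTheory.volume 0 h :=
    (continuous_e.comp (continuous_const.mul continuous_id)).intervalIntegrable _ _
  have hmean : 1 - eMean h ξ = (h⁻¹ : ℂ) * ∫ t in (0 : ℝ)..h, (1 - e (ξ * t)) := by
    rw [eMean, intervalIntegral.integral_sub intervalIntegrable_const hint,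
      intervalIntegral.integral_const, sub_zero, real_smul, mul_one, mul_sub,
      inv_mul_cancel₀ (ofReal_ne_zero.mpr hh.ne')]
  have hpt : ∀ t ∈ Set.uIoc 0 h, ‖1 - e (ξ * t)‖ ≤ 2 * π * |ξ| * h := by
    intro t ht
    rw [Set.uIoc_of_le hh.le] at ht
    rw [norm_sub_rev]
    refine (norm_e_sub_one_le _).trans ?_
    rw [abs_mul, abs_of_pos ht.1, ← mul_assoc]
    exact mul_le_mul_of_nonneg_left ht.2 (by positivity)
  rw [hmean, norm_mul, ← ofReal_inv, norm_real, Real.norm_of_nonneg (by positivity)]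
  calc h⁻¹ * ‖∫ t in (0 : ℝ)..h, (1 - e (ξ * t))‖ ≤ h⁻¹ * (2 * π * |ξ| * h * |h - 0|) := by
        gcongr; exact intervalIntegral.norm_integral_le_of_norm_le_const hpt
    _ = 2 * π * |ξ| * h := by rw [sub_zero, abs_of_pos hh]; field_simp

lemma mean_trigPoly_shift (s : Finset ℤ) (c : ℤ → ℂ) (h θ : ℝ) :
    (h⁻¹ : ℂ) * ∫ t in (0 : ℝ)..h, ∑ n ∈ s, c n * e (n * (θ + t))
      = ∑ n ∈ s, c n * e (n * θ) * eMean h n := by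
  rw [intervalIntegral.integral_finsetSum fun n _ =>
    (by unfold e; fun_prop : Continuous fun t : ℝ => c n * e (n * (θ + t))).intervalIntegrable _ _,
    mul_sum]
  refine sum_congr rfl fun n _ => ?_
  simp_rw [mul_add, e_add, ← mul_assoc, intervalIntegral.integral_const_mul, eMean]
  ring

lemma norm_mean_shift_le {f : ℝ → ℂ} {K h : ℝ} (hh : 0 < h) (hf : ∀ t, ‖f t‖ ≤ K) (θ : ℝ) :
    ‖(h⁻¹ : ℂ) * ∫ t in (0 : ℝ)..h, f (θ + t)‖ ≤ K := by
  rw [norm_mul, ← ofReal_inv, norm_real, Real.norm_of_nonneg (by positivity)]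
  calc h⁻¹ * ‖∫ t in (0 : ℝ)..h, f (θ + t)‖ ≤ h⁻¹ * (K * |h - 0|) := by
        gcongr; exact intervalIntegral.norm_integral_le_of_norm_le_const fun t _ => hf _
    _ = K := by rw [sub_zero, abs_of_pos hh]; field_simp

noncomputable def punctIcc (N : ℕ) : Finset ℤ := (Icc (-(N : ℤ)) N).filter (fun n => n ≠ 0)

lemma expSum_eq (a : ℤ → ℂ) (N : ℕ) (θ : ℝ) :
    expSum a N θ = ∑ n ∈ punctIcc N, a n / n * e (n * θ) := rfl

lemma mem_punctIcc {N : ℕ} {n : ℤ} : n ∈ punctIcc N ↔ n ≠ 0 ∧ n.natAbs ≤ N := by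
  simp only [punctIcc, mem_filter, mem_Icc]
  omega

lemma card_punctIcc (N : ℕ) : #(punctIcc N) = 2 * N := by
  rw [punctIcc, filter_ne', card_erase_of_mem (by simp), Int.card_Icc]
  omega

lemma punctIcc_mono {N M : ℕ} (h : N ≤ M) : punctIcc N ⊆ punctIcc M := fun n hn => by
  rw [mem_punctIcc] at hn ⊢
  omega

lemma sum_sdiff_punctIcc_inv_sq_le {N M : ℕ} (hN : N ≠ 0) (hNM : N ≤ M) :
    ∑ n ∈ punctIcc M \ punctIcc N, ((n : ℝ) ^ 2)⁻¹ ≤ 2 / N := by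
  set S := punctIcc M \ punctIcc N
  have hS : ∀ n ∈ S, n.natAbs ∈ Ioc N M := fun n hn => by
    simp only [S, mem_sdiff, mem_punctIcc] at hn
    simp only [mem_Ioc]
    omega
  have hfibre : ∀ k : ℕ, #{n ∈ S | n.natAbs = k} ≤ 2 := fun k =>
    (card_le_card (t := {(k : ℤ), -(k : ℤ)}) fun n hn => by
      obtain ⟨-, rfl⟩ := mem_filter.mp hn
      rw [mem_insert, mem_singleton]
      exact Int.natAbs_eq n).trans card_le_two
  calc ∑ n ∈ S, ((n : ℝ) ^ 2)⁻¹ = ∑ n ∈ S, (((n.natAbs : ℕ) : ℝ) ^ 2)⁻¹ := by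
        refine sum_congr rfl fun n _ => ?_
        rw [Nat.cast_natAbs, Int.cast_abs, sq_abs]
    _ = ∑ k ∈ S.image Int.natAbs, #{n ∈ S | n.natAbs = k} • ((k : ℝ) ^ 2)⁻¹ :=
        sum_comp (fun k : ℕ => ((k : ℝ) ^ 2)⁻¹) _
    _ ≤ ∑ k ∈ Ioc N M, 2 * ((k : ℝ) ^ 2)⁻¹ := by
        refine sum_le_sum_of_subset_of_nonneg (image_subset_iff.mpr hS) (fun _ _ _ => by positivity)
          |>.trans' (sum_le_sum fun k _ => ?_)
        rw [nsmul_eq_mul]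
        gcongr
        exact_mod_cast hfibre k
    _ ≤ 2 / N := by
        rw [← mul_sum, div_eq_mul_inv]
        have := sum_Ioc_inv_sq_le_sub (α := ℝ) hN hNM
        gcongr
        linarith [inv_nonneg.mpr (Nat.cast_nonneg (α := ℝ) M)]

lemma norm_coeff_mul_e_le {a : ℤ → ℂ} (ha : ∀ n, ‖a n‖ ≤ 1) (n : ℤ) (θ : ℝ) :
    ‖a n / n * e (n * θ)‖ ≤ |(n : ℝ)|⁻¹ := by
  rw [norm_mul, norm_e, mul_one, norm_div, norm_intCast, inv_eq_one_div]
  exact div_le_div_of_nonneg_right (ha n) (abs_nonneg _)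

lemma norm_coeff_mul_e_mul_one_sub_eMean_le {a : ℤ → ℂ} (ha : ∀ n, ‖a n‖ ≤ 1) {n : ℤ}
    (hn : n ≠ 0) {h : ℝ} (hh : 0 < h) (θ : ℝ) :
    ‖a n / n * e (n * θ) * (1 - eMean h n)‖ ≤ 2 * π * h := by
  have hn : (n : ℝ) ≠ 0 := by exact_mod_cast hn
  calc _ ≤ |(n : ℝ)|⁻¹ * (2 * π * |(n : ℝ)| * h) := by
        rw [norm_mul]
        gcongr
        · exact norm_coeff_mul_e_le ha n θ
        · exact norm_one_sub_eMean_le hh _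
    _ = 2 * π * h := by field_simp

lemma norm_coeff_mul_e_mul_eMean_le {a : ℤ → ℂ} (ha : ∀ n, ‖a n‖ ≤ 1) {n : ℤ}
    (hn : n ≠ 0) {h : ℝ} (hh : 0 < h) (θ : ℝ) :
    ‖a n / n * e (n * θ) * eMean h n‖ ≤ (π * h)⁻¹ * ((n : ℝ) ^ 2)⁻¹ := by
  have hn : (n : ℝ) ≠ 0 := by exact_mod_cast hn
  calc _ ≤ |(n : ℝ)|⁻¹ * (π * h * |(n : ℝ)|)⁻¹ := by
        rw [norm_mul]
        gcongr
        · exact norm_coeff_mul_e_le ha n θ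
        · exact norm_eMean_le hh hn
    _ = (π * h)⁻¹ * ((n : ℝ) ^ 2)⁻¹ := by
        rw [← sq_abs]
        field_simp

lemma norm_expSum_sub_mean_le {a : ℤ → ℂ} (ha : ∀ n, ‖a n‖ ≤ 1) {N M : ℕ} (hN : N ≠ 0)
    (hNM : N ≤ M) (θ : ℝ) :
    ‖expSum a N θ - ∑ n ∈ punctIcc M, a n / n * e (n * θ) * eMean (N : ℝ)⁻¹ n‖
      ≤ 4 * π + 2 / π := by
  set g : ℤ → ℂ := fun n => a n / n * e (n * θ)
  set K : ℤ → ℂ := fun n => eMean (N : ℝ)⁻¹ n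
  have hh : (0 : ℝ) < (N : ℝ)⁻¹ := by positivity
  have hsplit : expSum a N θ - ∑ n ∈ punctIcc M, g n * K n
      = ∑ n ∈ punctIcc N, g n * (1 - K n) - ∑ n ∈ punctIcc M \ punctIcc N, g n * K n := by
    rw [expSum_eq, ← sum_sdiff (punctIcc_mono hNM)]
    simp only [mul_sub, mul_one, sum_sub_distrib]
    ring
  calc _ ≤ ∑ n ∈ punctIcc N, ‖g n * (1 - K n)‖ + ∑ n ∈ punctIcc M \ punctIcc N, ‖g n * K n‖ := by
        rw [hsplit]
        exact (norm_sub_le _ _).trans (add_le_add (norm_sum_le _ _) (norm_sum_le _ _))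
    _ ≤ ∑ n ∈ punctIcc N, 2 * π * (N : ℝ)⁻¹
          + ∑ n ∈ punctIcc M \ punctIcc N, (π * (N : ℝ)⁻¹)⁻¹ * ((n : ℝ) ^ 2)⁻¹ := by
        gcongr with n hn n hn
        · exact norm_coeff_mul_e_mul_one_sub_eMean_le ha (mem_punctIcc.mp hn).1 hh θ
        · exact norm_coeff_mul_e_mul_eMean_le ha
            (mem_punctIcc.mp (mem_sdiff.mp hn).1).1 hh θ
    _ ≤ (2 * N : ℕ) * (2 * π * (N : ℝ)⁻¹) + (π * (N : ℝ)⁻¹)⁻¹ * (2 / N) := by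
        rw [sum_const, card_punctIcc, nsmul_eq_mul, ← mul_sum]
        gcongr
        exact sum_sdiff_punctIcc_inv_sq_le hN hNM
    _ = 4 * π + 2 / π := by
        push_cast
        field_simp
        ring

lemma norm_expSum_le_of_forall_norm_le {a : ℤ → ℂ} (ha : ∀ n, ‖a n‖ ≤ 1) {N M : ℕ}
    (hN : N ≠ 0) (hNM : N ≤ M) {K : ℝ} (hK : ∀ t, ‖expSum a M t‖ ≤ K) (θ : ℝ) :
    ‖expSum a N θ‖ ≤ K + (4 * π + 2 / π) := by
  have hmean := norm_mean_shift_le (h := (N : ℝ)⁻¹) (by positivity) hK θ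
  rw [funext fun t => expSum_eq a M (θ + t), mean_trigPoly_shift] at hmean
  exact (norm_le_norm_add_norm_sub' _ _).trans
    (add_le_add hmean (norm_expSum_sub_mean_le ha hN hNM θ))

lemma expSum_periodic (a : ℤ → ℂ) (N : ℕ) : Function.Periodic (expSum a N) 1 := fun θ => by
  simp only [expSum_eq, mul_add, mul_one, e_add, e_intCast]

lemma continuous_expSum (a : ℤ → ℂ) (N : ℕ) : Continuous (expSum a N) := by
  unfold expSum e
  fun_prop

/-- Lemma 2.2 of Goldmakher–Lamzouri: for `|a(n)| ≤ 1` and `x ≥ 2`,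
`max_{θ ∈ [0,1]} max_{1 ≤ N ≤ x} |∑_{1≤|n|≤N} (a(n)/n) e(nθ)|
  = max_{θ ∈ [0,1]} |∑_{1≤|n|≤x} (a(n)/n) e(nθ)| + O(1)`,
with an absolute implied constant. -/
theorem stmt19 :
    ∃ C : ℝ, ∀ (a : ℤ → ℂ), (∀ n : ℤ, ‖a n‖ ≤ 1) → ∀ x : ℝ, 2 ≤ x →
      |sSup ((fun p : ℝ × ℕ => ‖expSum a p.2 p.1‖) ''
            (Set.Icc (0 : ℝ) 1 ×ˢ {N : ℕ | 1 ≤ N ∧ (N : ℝ) ≤ x})) -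
        sSup ((fun θ : ℝ => ‖expSum a ⌊x⌋₊ θ‖) '' Set.Icc (0 : ℝ) 1)| ≤ C := by
  refine ⟨4 * π + 2 / π, fun a ha x hx => ?_⟩
  set M := ⌊x⌋₊
  set A := (fun p : ℝ × ℕ => ‖expSum a p.2 p.1‖) ''
    (Set.Icc (0 : ℝ) 1 ×ˢ {N : ℕ | 1 ≤ N ∧ (N : ℝ) ≤ x})
  set B := (fun θ : ℝ => ‖expSum a M θ‖) '' Set.Icc (0 : ℝ) 1
  have hperiodic := (expSum_periodic a M).comp (‖·‖)
  have hrange : B = Set.range ((‖·‖) ∘ expSum a M) := by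
    simpa using hperiodic.image_Icc one_pos 0
  have hbdd := (hperiodic.compact_of_continuous one_ne_zero (continuous_expSum a M).norm).bddAbove
  have hsup : ∀ t, ‖expSum a M t‖ ≤ sSup B :=
    fun t => hrange ▸ le_csSup hbdd (Set.mem_range_self t)
  have hA : ∀ y ∈ A, y ≤ sSup B + (4 * π + 2 / π) := by
    rintro _ ⟨⟨θ, N⟩, ⟨-, hN, hNx⟩, rfl⟩
    exact norm_expSum_le_of_forall_norm_le ha (by omega) (Nat.le_floor hNx) hsup θ
  have hBA : B ⊆ A := by
    rintro _ ⟨θ, hθ, rfl⟩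
    exact ⟨(θ, M), ⟨hθ, Nat.le_floor (by push_cast; linarith), Nat.floor_le (by linarith)⟩, rfl⟩
  have hB : B.Nonempty := ⟨_, 0, ⟨le_rfl, zero_le_one⟩, rfl⟩
  have hBA_sup : sSup B ≤ sSup A := csSup_le_csSup ⟨_, hA⟩ hB hBA
  have hAB_sup : sSup A ≤ sSup B + (4 * π + 2 / π) := csSup_le (hB.mono hBA) hA
  rw [abs_sub_le_iff]
  constructor <;> linarith [Real.pi_pos, div_pos two_pos Real.pi_pos]
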